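/- Let ρ and σ be density matrices on a bipartite Hilbert space of total dimension d, with ‖ρ - σ‖₁ ≤ ε. Then the logarithmic negativities satisfy |E_N(ρ) - E_N(σ)| ≤ √d · ε / ln 2, where E_N(ρ) = log₂ ‖ρ^{T_A}‖₁. -/

import Mathlib

/-!
For Hermitian `H` the trace norm is `∑ |λᵢ(H)| = max_W Re tr (W H)` over unitaries `W`, the
maximum being attained at `W = sign H`; this gives the triangle inequality on Hermitian matrices.
Hence `|‖ρ^Γ‖₁ - ‖σ^Γ‖₁| ≤ ‖(ρ - σ)^Γ‖₁ ≤ √d ‖(ρ - σ)^Γ‖₂ = √d ‖ρ - σ‖₂ ≤ √d ‖ρ - σ‖₁`, by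
Cauchy–Schwarz on the singular values and because the partial transpose only permutes entries.
Both trace norms are at least the trace `1`, and `log` is `1`-Lipschitz on `[1, ∞)`.
-/

open scoped ComplexOrder

variable {a b : Type*} [Fintype a] [Fintype b] [DecidableEq a] [DecidableEq b]

/-- The trace norm (Schatten 1-norm): the sum of the singular values. -/
noncomputable def traceNorm (M : Matrix (a × b) (a × b) ℂ) : ℝ :=
  ∑ i, Real.sqrt ((Matrix.isHermitian_conjTranspose_mul_self M).eigenvalues i)

/-- The partial transpose with respect to the first tensor factor. -/
def partialTranspose (M : Matrix (a × b) (a × b) ℂ) : Matrix (a × b) (a × b) ℂ :=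
  fun p q => M (q.1, p.2) (p.1, q.2)

/-- The logarithmic negativity `E_N(ρ) = log₂ ‖ρ^{T_A}‖₁`. -/
noncomputable def logNeg (ρ : Matrix (a × b) (a × b) ℂ) : ℝ :=
  Real.logb 2 (traceNorm (partialTranspose ρ))

open Matrix
open scoped Matrix.Norms.Frobenius

namespace Matrix

lemma frobenius_norm_sq {m n : Type*} [Fintype m] [Fintype n] (M : Matrix m n ℂ) :
    ‖M‖ ^ 2 = ∑ i, ∑ j, ‖M i j‖ ^ 2 := by
  rw [frobenius_norm_def, ← Real.sqrt_eq_rpow, Real.sq_sqrt (by positivity)]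
  simp_rw [Real.rpow_two]

variable {n : Type*} [Fintype n] [DecidableEq n]

noncomputable def nuclearNorm (M : Matrix n n ℂ) : ℝ :=
  ∑ i, √((isHermitian_conjTranspose_mul_self M).eigenvalues i)

lemma nuclearNorm_neg (M : Matrix n n ℂ) : (-M).nuclearNorm = M.nuclearNorm := by
  simp only [nuclearNorm, conjTranspose_neg, neg_mul_neg]

lemma IsHermitian.sum_comp_eigenvalues_cfc {A : Matrix n n ℂ} (hA : A.IsHermitian) (f g : ℝ → ℝ)
    (hfA : (cfc f A).IsHermitian) :
    ∑ i, g (hfA.eigenvalues i) = ∑ i, g (f (hA.eigenvalues i)) := by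
  have heig : Finset.univ.val.map hfA.eigenvalues = Finset.univ.val.map (f ∘ hA.eigenvalues) := by
    apply Multiset.map_injective (RCLike.ofReal_injective (K := ℂ))
    rw [Multiset.map_map, Multiset.map_map, ← hfA.roots_charpoly_eq_eigenvalues,
      hA.charpoly_cfc_eq, Polynomial.roots_prod _ _
        (Finset.prod_ne_zero_iff.mpr fun _ _ ↦ Polynomial.X_sub_C_ne_zero _)]
    simp
  simpa only [Finset.sum_eq_multiset_sum, Multiset.map_map, Function.comp_def] using
    congrArg (fun s ↦ (s.map g).sum) heig

lemma IsHermitian.nuclearNorm_eq_sum_abs_eigenvalues {H : Matrix n n ℂ} (hH : H.IsHermitian) :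
    H.nuclearNorm = ∑ i, |hH.eigenvalues i| := by
  have hsq : Hᴴ * H = cfc (· ^ 2 : ℝ → ℝ) H := by
    rw [cfc_pow_id H 2 hH.isSelfAdjoint, hH.eq, sq]
  have := hH.sum_comp_eigenvalues_cfc (· ^ 2) Real.sqrt (hsq ▸ isHermitian_conjTranspose_mul_self H)
  simp only [Real.sqrt_sq_eq_abs] at this
  rw [← this, nuclearNorm]
  congr!

lemma trace_conjStarAlgAut (u : unitaryGroup n ℂ) (X : Matrix n n ℂ) :
    (Unitary.conjStarAlgAut ℂ _ u X).trace = X.trace := by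
  rw [Unitary.conjStarAlgAut_apply, trace_mul_cycle, Unitary.coe_star_mul_self, one_mul]

lemma re_trace_mul_diagonal_le {V : Matrix n n ℂ} (hV : V ∈ unitaryGroup n ℂ) (d : n → ℝ) :
    (V * diagonal (fun i ↦ (d i : ℂ))).trace.re ≤ ∑ i, |d i| := by
  simp only [trace, diag, mul_diagonal, Complex.re_sum, Complex.re_mul_ofReal]
  refine Finset.sum_le_sum fun i _ ↦ ?_
  calc (V i i).re * d i ≤ |(V i i).re| * |d i| := by rw [← abs_mul]; exact le_abs_self _
    _ ≤ 1 * |d i| := by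
      gcongr
      exact (Complex.abs_re_le_norm _).trans (entry_norm_bound_of_unitary hV i i)
    _ = |d i| := one_mul _

lemma IsHermitian.re_trace_unitary_mul_le_nuclearNorm {K W : Matrix n n ℂ} (hK : K.IsHermitian)
    (hW : W ∈ unitaryGroup n ℂ) : (W * K).trace.re ≤ K.nuclearNorm := by
  set u := hK.eigenvectorUnitary
  have hconj : (W * K).trace = (star (u : Matrix n n ℂ) * W * u *
      diagonal (fun i ↦ (hK.eigenvalues i : ℂ))).trace := by
    conv_lhs => rw [hK.spectral_theorem, Unitary.conjStarAlgAut_apply]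
    rw [← mul_assoc, trace_mul_cycle, mul_assoc, mul_assoc, mul_assoc]
    rfl
  rw [hconj, hK.nuclearNorm_eq_sum_abs_eigenvalues]
  exact re_trace_mul_diagonal_le (mul_mem (mul_mem (Unitary.star_mem u.2) hW) u.2) hK.eigenvalues

lemma IsHermitian.re_trace_le_nuclearNorm {H : Matrix n n ℂ} (hH : H.IsHermitian) :
    H.trace.re ≤ H.nuclearNorm := by
  simpa using hH.re_trace_unitary_mul_le_nuclearNorm (one_mem _)

lemma IsHermitian.exists_unitary_re_trace_mul_eq_nuclearNorm {H : Matrix n n ℂ}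
    (hH : H.IsHermitian) : ∃ W ∈ unitaryGroup n ℂ, (W * H).trace.re = H.nuclearNorm := by
  set u := hH.eigenvectorUnitary
  let s : n → ℂ := fun i ↦ if 0 ≤ hH.eigenvalues i then 1 else -1
  have hs : diagonal s ∈ unitaryGroup n ℂ := by
    rw [mem_unitaryGroup_iff, star_eq_conjTranspose, diagonal_conjTranspose,
      diagonal_mul_diagonal, ← diagonal_one]
    congr 1 with i
    by_cases h : 0 ≤ hH.eigenvalues i <;> simp [s, h]
  refine ⟨Unitary.conjStarAlgAut ℂ _ u (diagonal s), ?_, ?_⟩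
  · rw [Unitary.conjStarAlgAut_apply]
    exact mul_mem (mul_mem u.2 hs) (Unitary.star_mem u.2)
  · conv_lhs => rw [hH.spectral_theorem]
    rw [← map_mul, trace_conjStarAlgAut, diagonal_mul_diagonal, trace_diagonal, Complex.re_sum,
      hH.nuclearNorm_eq_sum_abs_eigenvalues]
    refine Finset.sum_congr rfl fun i _ ↦ ?_
    by_cases h : 0 ≤ hH.eigenvalues i
    · simp [s, h, abs_of_nonneg h]
    · simp [s, h, abs_of_neg (not_le.mp h)]

lemma IsHermitian.nuclearNorm_add_le {A B : Matrix n n ℂ} (hA : A.IsHermitian)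
    (hB : B.IsHermitian) : (A + B).nuclearNorm ≤ A.nuclearNorm + B.nuclearNorm := by
  obtain ⟨W, hW, hWAB⟩ := (hA.add hB).exists_unitary_re_trace_mul_eq_nuclearNorm
  rw [← hWAB, mul_add, trace_add, Complex.add_re]
  exact add_le_add (hA.re_trace_unitary_mul_le_nuclearNorm hW)
    (hB.re_trace_unitary_mul_le_nuclearNorm hW)

lemma IsHermitian.abs_nuclearNorm_sub_nuclearNorm_le {A B : Matrix n n ℂ} (hA : A.IsHermitian)
    (hB : B.IsHermitian) : |A.nuclearNorm - B.nuclearNorm| ≤ (A - B).nuclearNorm := by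
  have hAB := (hA.sub hB).nuclearNorm_add_le hB
  have hBA := (hB.sub hA).nuclearNorm_add_le hA
  rw [sub_add_cancel] at hAB hBA
  rw [← neg_sub, nuclearNorm_neg] at hBA
  exact abs_sub_le_iff.mpr ⟨by linarith, by linarith⟩

lemma sum_eigenvalues_conjTranspose_mul_self (M : Matrix n n ℂ) :
    ∑ i, (isHermitian_conjTranspose_mul_self M).eigenvalues i = ‖M‖ ^ 2 := by
  have htr := congrArg Complex.re (isHermitian_conjTranspose_mul_self M).trace_eq_sum_eigenvalues
  simp only [Complex.coe_algebraMap, Complex.re_sum, Complex.ofReal_re] at htr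
  rw [← htr, frobenius_norm_sq, Finset.sum_comm]
  simp only [trace, diag, mul_apply, conjTranspose_apply, Complex.star_def, Complex.conj_mul',
    Complex.re_sum, ← Complex.ofReal_pow, Complex.ofReal_re]

lemma frobenius_norm_le_nuclearNorm (M : Matrix n n ℂ) : ‖M‖ ≤ M.nuclearNorm := by
  have hnonneg := fun i ↦ (posSemidef_conjTranspose_mul_self M).eigenvalues_nonneg i
  refine (pow_le_pow_iff_left₀ (norm_nonneg M) (Finset.sum_nonneg fun _ _ ↦ Real.sqrt_nonneg _)
    two_ne_zero).mp ?_
  calc ‖M‖ ^ 2 = ∑ i, √((isHermitian_conjTranspose_mul_self M).eigenvalues i) ^ 2 := by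
        simp only [Real.sq_sqrt (hnonneg _), sum_eigenvalues_conjTranspose_mul_self]
    _ ≤ M.nuclearNorm ^ 2 := Finset.sum_sq_le_sq_sum_of_nonneg fun _ _ ↦ Real.sqrt_nonneg _

lemma nuclearNorm_le_sqrt_card_mul_frobenius_norm (M : Matrix n n ℂ) :
    M.nuclearNorm ≤ √(Fintype.card n) * ‖M‖ := by
  have hnonneg := fun i ↦ (posSemidef_conjTranspose_mul_self M).eigenvalues_nonneg i
  rw [← Real.sqrt_sq (norm_nonneg M), ← Real.sqrt_mul (Nat.cast_nonneg _)]
  refine Real.le_sqrt_of_sq_le ?_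
  calc M.nuclearNorm ^ 2
      ≤ Fintype.card n * ∑ i, √((isHermitian_conjTranspose_mul_self M).eigenvalues i) ^ 2 :=
        sq_sum_le_card_mul_sum_sq
    _ = Fintype.card n * ‖M‖ ^ 2 := by
        simp only [Real.sq_sqrt (hnonneg _), sum_eigenvalues_conjTranspose_mul_self]

end Matrix

section PartialTranspose

variable {α β : Type*}

lemma partialTranspose_sub (M N : Matrix (α × β) (α × β) ℂ) :
    partialTranspose (M - N) = partialTranspose M - partialTranspose N :=
  rfl

lemma Matrix.IsHermitian.partialTranspose {M : Matrix (α × β) (α × β) ℂ} (hM : M.IsHermitian) :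
    (partialTranspose M).IsHermitian :=
  ext fun p q ↦ by simpa [_root_.partialTranspose] using congrFun (congrFun hM (q.1, p.2)) (p.1, q.2)

variable [Fintype α] [Fintype β]

lemma trace_partialTranspose (M : Matrix (α × β) (α × β) ℂ) :
    (partialTranspose M).trace = M.trace :=
  rfl

lemma frobenius_norm_partialTranspose (M : Matrix (α × β) (α × β) ℂ) :
    ‖partialTranspose M‖ = ‖M‖ := by
  rw [frobenius_norm_def, frobenius_norm_def]
  congr 1
  rw [← Fintype.sum_prod_type', ← Fintype.sum_prod_type']
  exact Fintype.sum_equiv (Function.Involutive.toPerm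
    (fun x : (α × β) × (α × β) ↦ ((x.2.1, x.1.2), (x.1.1, x.2.2))) fun _ ↦ rfl) _ _ fun _ ↦ rfl

variable [DecidableEq α] [DecidableEq β]

lemma traceNorm_eq_nuclearNorm (M : Matrix (α × β) (α × β) ℂ) : traceNorm M = M.nuclearNorm :=
  rfl

lemma one_le_nuclearNorm_partialTranspose {ρ : Matrix (α × β) (α × β) ℂ} (hρ : ρ.IsHermitian)
    (hρ1 : ρ.trace = 1) : 1 ≤ (partialTranspose ρ).nuclearNorm := by
  simpa [trace_partialTranspose, hρ1] using hρ.partialTranspose.re_trace_le_nuclearNorm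

end PartialTranspose

lemma Real.abs_log_sub_log_le_abs_sub {x y : ℝ} (hx : 1 ≤ x) (hy : 1 ≤ y) :
    |Real.log x - Real.log y| ≤ |x - y| := by
  wlog hyx : y ≤ x generalizing x y
  · rw [abs_sub_comm, abs_sub_comm x]
    exact this hy hx (le_of_not_ge hyx)
  have hy0 : 0 < y := by linarith
  rw [abs_of_nonneg (sub_nonneg.mpr (Real.log_le_log hy0 hyx)), abs_of_nonneg (by linarith),
    ← Real.log_div (by positivity) hy0.ne']
  calc Real.log (x / y) ≤ x / y - 1 := Real.log_le_sub_one_of_pos (by positivity)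
    _ = (x - y) / y := by field_simp
    _ ≤ x - y := div_le_self (by linarith) hy

theorem abs_logNeg_sub_logNeg_le (ρ σ : Matrix (a × b) (a × b) ℂ)
    (hρ : ρ.PosSemidef) (hρ1 : ρ.trace = 1)
    (hσ : σ.PosSemidef) (hσ1 : σ.trace = 1)
    (ε : ℝ) (hd : traceNorm (ρ - σ) ≤ ε) :
    |logNeg ρ - logNeg σ| ≤ Real.sqrt (Fintype.card (a × b)) * ε / Real.log 2 := by
  have hρT := hρ.isHermitian.partialTranspose
  have hσT := hσ.isHermitian.partialTranspose
  have key : |Real.log (partialTranspose ρ).nuclearNorm - Real.log (partialTranspose σ).nuclearNorm|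
      ≤ √(Fintype.card (a × b)) * ε :=
    calc _ ≤ |(partialTranspose ρ).nuclearNorm - (partialTranspose σ).nuclearNorm| :=
          Real.abs_log_sub_log_le_abs_sub (one_le_nuclearNorm_partialTranspose hρ.1 hρ1)
            (one_le_nuclearNorm_partialTranspose hσ.1 hσ1)
      _ ≤ (partialTranspose (ρ - σ)).nuclearNorm := by
          rw [partialTranspose_sub]
          exact hρT.abs_nuclearNorm_sub_nuclearNorm_le hσT
      _ ≤ √(Fintype.card (a × b)) * ‖ρ - σ‖ := by
          rw [← frobenius_norm_partialTranspose]
          exact nuclearNorm_le_sqrt_card_mul_frobenius_norm _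
      _ ≤ √(Fintype.card (a × b)) * ε := by
          gcongr
          exact (frobenius_norm_le_nuclearNorm _).trans hd
  rw [logNeg, logNeg, traceNorm_eq_nuclearNorm, traceNorm_eq_nuclearNorm, Real.logb, Real.logb,
    ← sub_div, abs_div, abs_of_pos (Real.log_pos one_lt_two)]
  gcongr
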